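/- Uniqueness under two-sided blow-up rate (exponential case): Suppose u₁, u₂ ∈ C²(Ω) both satisfy Lu_i(x) = e^{u_i(x)} for all x ∈ Ω and u_i(x) → +∞ as d(x) → 0 (i = 1, 2), and suppose there are constants N₁, N₂, ρ > 0 such that N₁ d(x)^{−2} ≤ e^{u_i(x)} ≤ N₂ d(x)^{−2} for all x in Δ_ρ := {x ∈ Ω : d(x) < ρ} and i = 1, 2. Then u₁ ≡ u₂ in Ω. -/

import Mathlib

open Metric Set Filter Real Bornology

/-- First-order partial derivative `D_i u (x)`. -/
noncomputable def pd {n : ℕ} (u : EuclideanSpace ℝ (Fin n) → ℝ) (i : Fin n)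
    (x : EuclideanSpace ℝ (Fin n)) : ℝ :=
  fderiv ℝ u x (EuclideanSpace.single i 1)

/-- Second-order partial derivative `D_{ij} u (x)`. -/
noncomputable def pd2 {n : ℕ} (u : EuclideanSpace ℝ (Fin n) → ℝ) (i j : Fin n)
    (x : EuclideanSpace ℝ (Fin n)) : ℝ :=
  fderiv ℝ (fun y => fderiv ℝ u y (EuclideanSpace.single j 1)) x (EuclideanSpace.single i 1)

/-- The operator `L u = a^{ij} D_{ij} u + b^i D_i u - c u`. -/
noncomputable def Lop {n : ℕ} (a : EuclideanSpace ℝ (Fin n) → Fin n → Fin n → ℝ)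
    (b : EuclideanSpace ℝ (Fin n) → Fin n → ℝ) (c : EuclideanSpace ℝ (Fin n) → ℝ)
    (u : EuclideanSpace ℝ (Fin n) → ℝ) (x : EuclideanSpace ℝ (Fin n)) : ℝ :=
  (∑ i, ∑ j, a x i j * pd2 u i j x) + (∑ i, b x i * pd u i x) - c x * u x

/-- The standing assumptions on the coefficients of `L`: measurability, symmetry,
`Σ (b^i)² ≤ K`, `0 ≤ c ≤ K`, `K > 0`, and uniform ellipticity `λ|ξ|² ≤ aᵢⱼξᵢξⱼ ≤ Λ|ξ|²`
with `0 < λ ≤ Λ`. -/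
def CoeffsOK {n : ℕ} (a : EuclideanSpace ℝ (Fin n) → Fin n → Fin n → ℝ)
    (b : EuclideanSpace ℝ (Fin n) → Fin n → ℝ) (c : EuclideanSpace ℝ (Fin n) → ℝ)
    (K lam Lam : ℝ) : Prop :=
  (∀ i j, Measurable fun x => a x i j) ∧ (∀ i, Measurable fun x => b x i) ∧
  Measurable c ∧ (∀ x i j, a x i j = a x j i) ∧
  (∀ x, ∑ i, (b x i) ^ 2 ≤ K) ∧ (∀ x, 0 ≤ c x ∧ c x ≤ K) ∧
  0 < K ∧ 0 < lam ∧ lam ≤ Lam ∧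
  (∀ x (ξ : EuclideanSpace ℝ (Fin n)),
    lam * ‖ξ‖ ^ 2 ≤ ∑ i, ∑ j, a x i j * ξ i * ξ j ∧
    ∑ i, ∑ j, a x i j * ξ i * ξ j ≤ Lam * ‖ξ‖ ^ 2)

/-- `u(x) → +∞` as `d(x) := dist(x, ∂Ω) → 0`. -/
def BlowsUp {n : ℕ} (Ω : Set (EuclideanSpace ℝ (Fin n)))
    (u : EuclideanSpace ℝ (Fin n) → ℝ) : Prop :=
  ∀ M : ℝ, ∃ δ > 0, ∀ x ∈ Ω, infDist x (frontier Ω) < δ → M ≤ u x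

open Topology

/-! For `ε > 0` the two rates give `u₁ - (1 + ε) u₂ ≤ C + 2ε log d → -∞` at `∂Ω`, so
`w := u₁ - (1 + ε) u₂` attains its maximum over `Ω` at some `x₀ ∈ Ω`. There `∇w = 0` and `D²w ≤ 0`,
so if `w x₀ ≥ 0`, ellipticity and `c ≥ 0` give `e^{u₁} - (1 + ε) e^{u₂} = L w ≤ 0` at `x₀`, hence
`w ≤ w x₀ ≤ log (1 + ε) - ε u₂ x₀ ≤ ε (1 - inf u₂)`. As `u₂` blows up at `∂Ω` it is bounded below,
and `ε → 0` gives `u₁ ≤ u₂`; by symmetry `u₁ = u₂`. -/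

theorem IsLocalMax.deriv_deriv_nonpos {f : ℝ → ℝ} {x₀ : ℝ} (h : IsLocalMax f x₀)
    (hc : ContinuousAt f x₀) : deriv (deriv f) x₀ ≤ 0 := by
  by_contra! hpos
  -- `f'' x₀ > 0` would make `x₀` a local minimum too, so `f` would be locally constant
  have hconst : f =ᶠ[𝓝 x₀] fun _ => f x₀ := by
    filter_upwards [h, isLocalMin_of_deriv_deriv_pos hpos h.deriv_eq_zero hc] with y h₁ h₂
    exact le_antisymm h₁ h₂
  have hderiv : deriv f =ᶠ[𝓝 x₀] fun _ => 0 := by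
    simpa using hconst.deriv
  simp [hderiv.deriv_eq] at hpos

theorem ContDiffAt.differentiableAt_fderiv {E F : Type*} [NormedAddCommGroup E]
    [NormedSpace ℝ E] [NormedAddCommGroup F] [NormedSpace ℝ F] {f : E → F} {x : E}
    (hf : ContDiffAt ℝ 2 f x) : DifferentiableAt ℝ (fderiv ℝ f) x :=
  (hf.fderiv_right (m := 1) (by norm_num)).differentiableAt one_ne_zero

theorem IsLocalMax.fderiv_fderiv_apply_self_nonpos {E : Type*} [NormedAddCommGroup E]
    [NormedSpace ℝ E] {w : E → ℝ} {x₀ : E} (hmax : IsLocalMax w x₀) (hw : ContDiffAt ℝ 2 w x₀)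
    (v : E) : fderiv ℝ (fderiv ℝ w) x₀ v v ≤ 0 := by
  set ℓ : ℝ → E := fun t => x₀ + t • v
  have hℓ : ∀ t, HasDerivAt ℓ v t := fun t => by
    simpa only [one_smul] using ((hasDerivAt_id' t).smul_const v).const_add x₀
  have hℓ0 : x₀ = ℓ 0 := by simp [ℓ]
  rw [hℓ0] at hmax hw
  have hline : IsLocalMax (w ∘ ℓ) 0 := hmax.comp_continuous (hℓ 0).continuousAt
  have hdiff : ∀ᶠ t in 𝓝 (0 : ℝ), DifferentiableAt ℝ w (ℓ t) :=
    (hℓ 0).continuousAt.eventually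
      ((hw.eventually (by simp)).mono fun y hy => hy.differentiableAt (by norm_num))
  have hderiv : deriv (w ∘ ℓ) =ᶠ[𝓝 0] fun t => fderiv ℝ w (ℓ t) v :=
    hdiff.mono fun t ht => (ht.hasFDerivAt.comp_hasDerivAt t (hℓ t)).deriv
  have hφ : HasFDerivAt (fun y => fderiv ℝ w y v)
      ((ContinuousLinearMap.apply ℝ ℝ v).comp (fderiv ℝ (fderiv ℝ w) (ℓ 0))) (ℓ 0) :=
    (ContinuousLinearMap.apply ℝ ℝ v).hasFDerivAt.comp _ hw.differentiableAt_fderiv.hasFDerivAt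
  have hsecond : HasDerivAt (fun t => fderiv ℝ w (ℓ t) v)
      (fderiv ℝ (fderiv ℝ w) (ℓ 0) v v) 0 := hφ.comp_hasDerivAt 0 (hℓ 0)
  have := hline.deriv_deriv_nonpos (hw.continuousAt.comp (hℓ 0).continuousAt)
  rw [hderiv.deriv_eq, hsecond.deriv] at this
  rwa [hℓ0]

open scoped MatrixOrder in
theorem Matrix.PosSemidef.sum_mul_nonpos {ι : Type*} [Fintype ι] [DecidableEq ι]
    {A H : Matrix ι ι ℝ} (hA : A.PosSemidef) (hH : ∀ v : ι → ℝ, ∑ i, ∑ j, v i * v j * H i j ≤ 0) :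
    ∑ i, ∑ j, A i j * H i j ≤ 0 := by
  obtain ⟨X, rfl⟩ : ∃ X : Matrix ι ι ℝ, A = star X * X :=
    ⟨CFC.sqrt A, by
      rw [(CFC.sqrt_nonneg A).isSelfAdjoint.star_eq, CFC.sqrt_mul_sqrt_self A hA.nonneg]⟩
  calc ∑ i, ∑ j, (star X * X) i j * H i j = ∑ i, ∑ k, ∑ j, X k i * X k j * H i j :=
        Finset.sum_congr rfl fun i _ => by
          simp only [Matrix.mul_apply, Matrix.star_apply, star_trivial, Finset.sum_mul]
          exact Finset.sum_comm
    _ = ∑ k, ∑ i, ∑ j, X k i * X k j * H i j := Finset.sum_comm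
    _ ≤ 0 := Finset.sum_nonpos fun k _ => hH (X k)

theorem Matrix.posSemidef_of_sum_mul_mul_nonneg {ι : Type*} [Fintype ι] {A : Matrix ι ι ℝ}
    (hsymm : ∀ i j, A i j = A j i) (hA : ∀ v : ι → ℝ, 0 ≤ ∑ i, ∑ j, A i j * v i * v j) :
    A.PosSemidef := by
  refine .of_dotProduct_mulVec_nonneg (Matrix.IsHermitian.ext fun i j => by simpa using hsymm j i)
    fun v => (hA v).trans_eq ?_
  simp only [dotProduct, Matrix.mulVec, star_trivial, Finset.mul_sum]
  exact Finset.sum_congr rfl fun i _ => Finset.sum_congr rfl fun j _ => by ring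

theorem EuclideanSpace.bilin_apply_eq_sum {ι : Type*} [Fintype ι] [DecidableEq ι]
    (B : EuclideanSpace ℝ ι →L[ℝ] EuclideanSpace ℝ ι →L[ℝ] ℝ) (v w : EuclideanSpace ℝ ι) :
    B v w = ∑ i, ∑ j, v i * w j * B (single i 1) (single j 1) := by
  conv_lhs => rw [← (EuclideanSpace.basisFun ι ℝ).sum_repr v,
    ← (EuclideanSpace.basisFun ι ℝ).sum_repr w]
  simp only [EuclideanSpace.basisFun_repr, EuclideanSpace.basisFun_apply, map_sum, map_smul,
    sum_apply, smul_apply, smul_eq_mul, Finset.mul_sum, mul_assoc]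
  rw [Finset.sum_comm]
  simp_rw [mul_left_comm]

section Operator

variable {n : ℕ} {a : EuclideanSpace ℝ (Fin n) → Fin n → Fin n → ℝ}
  {b : EuclideanSpace ℝ (Fin n) → Fin n → ℝ} {c : EuclideanSpace ℝ (Fin n) → ℝ}
  {u u₁ u₂ : EuclideanSpace ℝ (Fin n) → ℝ} {x : EuclideanSpace ℝ (Fin n)}

theorem pd_eq_iteratedFDeriv (u : EuclideanSpace ℝ (Fin n) → ℝ) (i : Fin n)
    (x : EuclideanSpace ℝ (Fin n)) :
    pd u i x = iteratedFDeriv ℝ 1 u x ![EuclideanSpace.single i 1] := by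
  simp [pd, iteratedFDeriv_one_apply]

theorem pd2_eq_fderiv_fderiv (hu : DifferentiableAt ℝ (fderiv ℝ u) x) (i j : Fin n) :
    pd2 u i j x =
      fderiv ℝ (fderiv ℝ u) x (EuclideanSpace.single i 1) (EuclideanSpace.single j 1) := by
  simp [pd2, fderiv_clm_apply hu (differentiableAt_const _)]

theorem pd2_eq_iteratedFDeriv (hu : ContDiffAt ℝ 2 u x) (i j : Fin n) :
    pd2 u i j x =
      iteratedFDeriv ℝ 2 u x ![EuclideanSpace.single i 1, EuclideanSpace.single j 1] := by
  rw [iteratedFDeriv_two_apply, pd2_eq_fderiv_fderiv hu.differentiableAt_fderiv]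
  rfl

theorem Lop_sub_smul (hu₁ : ContDiffAt ℝ 2 u₁ x) (hu₂ : ContDiffAt ℝ 2 u₂ x) (t : ℝ) :
    Lop a b c (u₁ - t • u₂) x = Lop a b c u₁ x - t * Lop a b c u₂ x := by
  have ht₂ : ContDiffAt ℝ 2 (t • u₂) x := hu₂.const_smul t
  have hw : ContDiffAt ℝ 2 (u₁ - t • u₂) x := hu₁.sub ht₂
  have h₁ : ContDiffAt ℝ 1 u₁ x := hu₁.of_le one_le_two
  have h₂ : ContDiffAt ℝ 1 u₂ x := hu₂.of_le one_le_two
  have ht₂' : ContDiffAt ℝ 1 (t • u₂) x := ht₂.of_le one_le_two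
  simp only [Lop, pd_eq_iteratedFDeriv, pd2_eq_iteratedFDeriv hw,
    pd2_eq_iteratedFDeriv hu₁, pd2_eq_iteratedFDeriv hu₂]
  simp only [iteratedFDeriv_sub_apply hu₁ ht₂, iteratedFDeriv_const_smul_apply hu₂,
    iteratedFDeriv_sub_apply h₁ ht₂', iteratedFDeriv_const_smul_apply h₂, sub_apply, smul_apply,
    Pi.sub_apply, Pi.smul_apply, smul_eq_mul, mul_sub, mul_add, Finset.sum_sub_distrib]
  simp only [Finset.mul_sum, mul_left_comm t]
  ring

theorem Lop_nonpos_of_isLocalMax (hmax : IsLocalMax u x) (hu : ContDiffAt ℝ 2 u x)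
    (hsymm : ∀ i j, a x i j = a x j i) (hell : ∀ ξ : Fin n → ℝ, 0 ≤ ∑ i, ∑ j, a x i j * ξ i * ξ j)
    (hc : 0 ≤ c x) (hu₀ : 0 ≤ u x) : Lop a b c u x ≤ 0 := by
  have hfirst : ∀ i, pd u i x = 0 := fun i => by simp [pd, hmax.fderiv_eq_zero]
  have hsecond : ∑ i, ∑ j, a x i j * pd2 u i j x ≤ 0 := by
    simp only [pd2_eq_fderiv_fderiv hu.differentiableAt_fderiv]
    refine (Matrix.posSemidef_of_sum_mul_mul_nonneg (A := Matrix.of (a x)) hsymm hell)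
      |>.sum_mul_nonpos (H := Matrix.of fun i j => fderiv ℝ (fderiv ℝ u) x
        (EuclideanSpace.single i 1) (EuclideanSpace.single j 1)) fun v => ?_
    have := hmax.fderiv_fderiv_apply_self_nonpos hu (WithLp.toLp 2 v)
    rw [EuclideanSpace.bilin_apply_eq_sum] at this
    simpa using this
  simp only [Lop, hfirst, mul_zero, Finset.sum_const_zero, add_zero]
  linarith [mul_nonneg hc hu₀]

end Operator

section Boundary

variable {E : Type*} [MetricSpace E] {Ω : Set E}

/-- The filter of the limits `d(x) → 0` taken inside `Ω`. -/
noncomputable def nearBoundary (Ω : Set E) : Filter E :=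
  𝓟 Ω ⊓ comap (fun x => infDist x (frontier Ω)) (𝓝 0)

theorem eventually_nearBoundary {p : E → Prop} :
    (∀ᶠ x in nearBoundary Ω, p x) ↔ ∃ δ > 0, ∀ x ∈ Ω, infDist x (frontier Ω) < δ → p x := by
  rw [nearBoundary, inf_comm, ((nhds_basis_ball.comap _).inf_principal Ω).eventually_iff]
  simp only [mem_inter_iff, mem_preimage, mem_ball, Real.dist_eq, sub_zero,
    abs_of_nonneg infDist_nonneg, and_imp]
  exact exists_congr fun δ => and_congr_right fun _ => forall_congr' fun x => Imp.swap

theorem blowsUp_iff_tendsto {n : ℕ} {Ω : Set (EuclideanSpace ℝ (Fin n))}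
    {u : EuclideanSpace ℝ (Fin n) → ℝ} : BlowsUp Ω u ↔ Tendsto u (nearBoundary Ω) atTop := by
  simp only [BlowsUp, Filter.tendsto_atTop, eventually_nearBoundary]

theorem Bornology.IsBounded.exists_isMaxOn_of_tendsto_atBot [ProperSpace E] (hΩ : IsBounded Ω)
    (hne : Ω.Nonempty) {w : E → ℝ} (hw : ContinuousOn w Ω)
    (hlim : Tendsto w (nearBoundary Ω) atBot) : ∃ x₀ ∈ Ω, IsMaxOn w Ω x₀ := by
  obtain ⟨x₁, hx₁⟩ := hne
  obtain ⟨δ, hδ, hlow⟩ := eventually_nearBoundary.1 (hlim.eventually (eventually_lt_atBot (w x₁)))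
  set K := closure Ω ∩ {y | δ ≤ infDist y (frontier Ω)}
  have hKΩ : K ⊆ Ω := fun y ⟨hyc, hyδ⟩ => by
    by_contra hy
    have : infDist y (frontier Ω) = 0 :=
      infDist_zero_of_mem ⟨hyc, fun hyi => hy (interior_subset hyi)⟩
    linarith [hyδ.trans_eq this]
  have hK : IsCompact K :=
    hΩ.isCompact_closure.inter_right (isClosed_le continuous_const (continuous_infDist_pt _))
  have hx₁K : x₁ ∈ K := ⟨subset_closure hx₁, not_lt.1 fun h => (hlow x₁ hx₁ h).false⟩
  obtain ⟨x₀, hx₀K, hmax⟩ := hK.exists_isMaxOn ⟨x₁, hx₁K⟩ (hw.mono hKΩ)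
  refine ⟨x₀, hKΩ hx₀K, fun y hy => ?_⟩
  by_cases hyδ : infDist y (frontier Ω) < δ
  · exact (hlow y hy hyδ).le.trans (hmax hx₁K)
  · exact hmax ⟨subset_closure hy, not_lt.1 hyδ⟩

theorem tendsto_sub_smul_atBot_of_rate {u₁ u₂ : E → ℝ} {N₁ N₂ ρ ε : ℝ} (hN₁ : 0 < N₁)
    (hN₂ : 0 < N₂) (hρ : 0 < ρ) (hε : 0 < ε)
    (hrate₁ : ∀ x ∈ Ω, infDist x (frontier Ω) < ρ →
      exp (u₁ x) ≤ N₂ / infDist x (frontier Ω) ^ 2)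
    (hrate₂ : ∀ x ∈ Ω, infDist x (frontier Ω) < ρ →
      N₁ / infDist x (frontier Ω) ^ 2 ≤ exp (u₂ x)) :
    Tendsto (u₁ - (1 + ε) • u₂) (nearBoundary Ω) atBot := by
  set d : E → ℝ := fun x => infDist x (frontier Ω)
  have hnear : ∀ᶠ x in nearBoundary Ω, x ∈ Ω ∧ d x < ρ :=
    eventually_nearBoundary.2 ⟨ρ, hρ, fun x hx hd => ⟨hx, hd⟩⟩
  -- `N₂ / 0 ^ 2 = 0 < exp (u₁ x)`, so the upper rate forces `d x ≠ 0`
  have hpos : ∀ᶠ x in nearBoundary Ω, 0 < d x := hnear.mono fun x ⟨hx, hd⟩ =>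
    infDist_nonneg.lt_of_ne fun h => by
      simpa [d, ← h] using (exp_pos _).trans_le (hrate₁ x hx hd)
  have hd : Tendsto d (nearBoundary Ω) (𝓝[>] 0) :=
    tendsto_nhdsWithin_iff.2 ⟨tendsto_comap.mono_left inf_le_right, hpos⟩
  refine tendsto_atBot_mono' _ ?_ (tendsto_atBot_add_const_left _ (log N₂ - (1 + ε) * log N₁)
    ((tendsto_log_nhdsGT_zero.comp hd).const_mul_atBot (by positivity : (0 : ℝ) < 2 * ε)))
  filter_upwards [hnear, hpos] with x ⟨hx, hdρ⟩ hdx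
  have h₁ : u₁ x ≤ log N₂ - 2 * log (d x) := by
    have := (le_log_iff_exp_le (by positivity)).2 (hrate₁ x hx hdρ)
    rwa [log_div hN₂.ne' (by positivity), log_pow, Nat.cast_ofNat] at this
  have h₂ : log N₁ - 2 * log (d x) ≤ u₂ x := by
    have := (log_le_iff_le_exp (by positivity)).2 (hrate₂ x hx hdρ)
    rwa [log_div hN₁.ne' (by positivity), log_pow, Nat.cast_ofNat] at this
  simp only [Pi.sub_apply, Pi.smul_apply, smul_eq_mul, Function.comp_apply]
  linarith [mul_le_mul_of_nonneg_left h₂ (by positivity : (0 : ℝ) ≤ 1 + ε)]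

end Boundary

section Comparison

variable {n : ℕ} {Ω : Set (EuclideanSpace ℝ (Fin n))}
  {a : EuclideanSpace ℝ (Fin n) → Fin n → Fin n → ℝ} {b : EuclideanSpace ℝ (Fin n) → Fin n → ℝ}
  {c : EuclideanSpace ℝ (Fin n) → ℝ} {u₁ u₂ : EuclideanSpace ℝ (Fin n) → ℝ}

theorem sub_smul_le_of_isLocalMax {x₀ : EuclideanSpace ℝ (Fin n)} {ε m : ℝ} (hε : 0 < ε)
    (hmax : IsLocalMax (u₁ - (1 + ε) • u₂) x₀)
    (hu₁ : ContDiffAt ℝ 2 u₁ x₀) (hu₂ : ContDiffAt ℝ 2 u₂ x₀)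
    (hsymm : ∀ i j, a x₀ i j = a x₀ j i)
    (hell : ∀ ξ : Fin n → ℝ, 0 ≤ ∑ i, ∑ j, a x₀ i j * ξ i * ξ j) (hc : 0 ≤ c x₀)
    (heq₁ : Lop a b c u₁ x₀ = exp (u₁ x₀)) (heq₂ : Lop a b c u₂ x₀ = exp (u₂ x₀))
    (hm : m ≤ u₂ x₀) :
    u₁ x₀ - (1 + ε) * u₂ x₀ ≤ ε * max 0 (1 - m) := by
  rcases lt_or_ge (u₁ x₀ - (1 + ε) * u₂ x₀) 0 with hneg | hw₀
  · exact hneg.le.trans (by positivity)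
  have hw : ContDiffAt ℝ 2 (u₁ - (1 + ε) • u₂) x₀ := hu₁.sub (hu₂.const_smul (1 + ε))
  have hL := Lop_nonpos_of_isLocalMax (b := b) hmax hw hsymm hell hc hw₀
  rw [Lop_sub_smul hu₁ hu₂, heq₁, heq₂] at hL
  have hu : u₁ x₀ ≤ log (1 + ε) + u₂ x₀ := by
    rw [← exp_le_exp, exp_add, exp_log (by positivity)]
    linarith
  have hlog : log (1 + ε) ≤ ε := by linarith [log_le_sub_one_of_pos (by positivity : 0 < 1 + ε)]
  calc u₁ x₀ - (1 + ε) * u₂ x₀ ≤ ε * (1 - m) := by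
        linarith [mul_le_mul_of_nonneg_left hm hε.le]
    _ ≤ ε * max 0 (1 - m) := by gcongr; exact le_max_right _ _

theorem le_of_Lop_eq_exp_of_tendsto_atBot (hΩo : IsOpen Ω) (hΩb : IsBounded Ω)
    (hsymm : ∀ x i j, a x i j = a x j i)
    (hell : ∀ x (ξ : Fin n → ℝ), 0 ≤ ∑ i, ∑ j, a x i j * ξ i * ξ j) (hc : ∀ x, 0 ≤ c x)
    (hu₁ : ContDiffOn ℝ 2 u₁ Ω) (hu₂ : ContDiffOn ℝ 2 u₂ Ω)
    (heq₁ : ∀ x ∈ Ω, Lop a b c u₁ x = exp (u₁ x)) (heq₂ : ∀ x ∈ Ω, Lop a b c u₂ x = exp (u₂ x))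
    (hb₂ : BlowsUp Ω u₂)
    (hdecay : ∀ ε : ℝ, 0 < ε → Tendsto (u₁ - (1 + ε) • u₂) (nearBoundary Ω) atBot) :
    ∀ x ∈ Ω, u₁ x ≤ u₂ x := by
  intro x hx
  obtain ⟨xₘ, -, hmin⟩ := hΩb.exists_isMaxOn_of_tendsto_atBot (w := -u₂) ⟨x, hx⟩
    hu₂.continuousOn.neg (tendsto_neg_atTop_atBot.comp (blowsUp_iff_tendsto.1 hb₂))
  have hbound : ∀ ε : ℝ, 0 < ε → u₁ x - u₂ x ≤ ε * (max 0 (1 - u₂ xₘ) + u₂ x) := by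
    intro ε hε
    have hw : ContDiffOn ℝ 2 (u₁ - (1 + ε) • u₂) Ω := hu₁.sub (hu₂.const_smul (1 + ε))
    obtain ⟨x₀, hx₀, hmax⟩ :=
      hΩb.exists_isMaxOn_of_tendsto_atBot ⟨x, hx⟩ hw.continuousOn (hdecay ε hε)
    have h₀ := sub_smul_le_of_isLocalMax hε (hmax.isLocalMax (hΩo.mem_nhds hx₀))
      (hu₁.contDiffAt (hΩo.mem_nhds hx₀)) (hu₂.contDiffAt (hΩo.mem_nhds hx₀)) (hsymm x₀)
      (hell x₀) (hc x₀) (heq₁ x₀ hx₀) (heq₂ x₀ hx₀) (neg_le_neg_iff.1 (hmin hx₀))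
    have hx : (u₁ - (1 + ε) • u₂) x ≤ (u₁ - (1 + ε) • u₂) x₀ := hmax hx
    simp only [Pi.sub_apply, Pi.smul_apply, smul_eq_mul] at hx
    linarith
  have hlim : Tendsto (fun ε => ε * (max 0 (1 - u₂ xₘ) + u₂ x)) (𝓝[>] 0) (𝓝 0) :=
    ((continuous_mul_const _).tendsto' 0 0 (zero_mul _)).mono_left nhdsWithin_le_nhds
  exact sub_nonpos.1 (ge_of_tendsto hlim (eventually_mem_nhdsWithin.mono hbound))

end Comparison

theorem uniqueness_two_sided_rate_exponential_general {n : ℕ}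
    (Ω : Set (EuclideanSpace ℝ (Fin n)))
    (hΩo : IsOpen Ω) (hΩb : IsBounded Ω)
    (a : EuclideanSpace ℝ (Fin n) → Fin n → Fin n → ℝ)
    (b : EuclideanSpace ℝ (Fin n) → Fin n → ℝ)
    (c : EuclideanSpace ℝ (Fin n) → ℝ)
    (K lam Lam : ℝ) (hco : CoeffsOK a b c K lam Lam)
    (u₁ u₂ : EuclideanSpace ℝ (Fin n) → ℝ)
    (hu₁ : ContDiffOn ℝ 2 u₁ Ω) (hu₂ : ContDiffOn ℝ 2 u₂ Ω)
    (heq₁ : ∀ x ∈ Ω, Lop a b c u₁ x = Real.exp (u₁ x))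
    (heq₂ : ∀ x ∈ Ω, Lop a b c u₂ x = Real.exp (u₂ x))
    (hb₁ : BlowsUp Ω u₁) (hb₂ : BlowsUp Ω u₂)
    (N₁ N₂ ρ : ℝ) (hN₁ : 0 < N₁) (hN₂ : 0 < N₂) (hρ : 0 < ρ)
    (hrate₁ : ∀ x ∈ Ω, infDist x (frontier Ω) < ρ →
      N₁ / infDist x (frontier Ω) ^ 2 ≤ Real.exp (u₁ x) ∧
      Real.exp (u₁ x) ≤ N₂ / infDist x (frontier Ω) ^ 2)
    (hrate₂ : ∀ x ∈ Ω, infDist x (frontier Ω) < ρ →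
      N₁ / infDist x (frontier Ω) ^ 2 ≤ Real.exp (u₂ x) ∧
      Real.exp (u₂ x) ≤ N₂ / infDist x (frontier Ω) ^ 2) :
    EqOn u₁ u₂ Ω := by
  obtain ⟨-, -, -, hsymm, -, hc, -, hlam, -, hell⟩ := hco
  have hell' : ∀ x (ξ : Fin n → ℝ), 0 ≤ ∑ i, ∑ j, a x i j * ξ i * ξ j := fun x ξ =>
    (by positivity : 0 ≤ lam * ‖WithLp.toLp 2 ξ‖ ^ 2).trans (hell x (WithLp.toLp 2 ξ)).1
  have hc' : ∀ x, 0 ≤ c x := fun x => (hc x).1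
  intro x hx
  apply le_antisymm
  · refine le_of_Lop_eq_exp_of_tendsto_atBot hΩo hΩb hsymm hell' hc' hu₁ hu₂ heq₁ heq₂ hb₂
      (fun ε hε => ?_) x hx
    exact tendsto_sub_smul_atBot_of_rate hN₁ hN₂ hρ hε (fun y hy hd => (hrate₁ y hy hd).2)
      (fun y hy hd => (hrate₂ y hy hd).1)
  · refine le_of_Lop_eq_exp_of_tendsto_atBot hΩo hΩb hsymm hell' hc' hu₂ hu₁ heq₂ heq₁ hb₁
      (fun ε hε => ?_) x hx
    exact tendsto_sub_smul_atBot_of_rate hN₁ hN₂ hρ hε (fun y hy hd => (hrate₂ y hy hd).2)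
      (fun y hy hd => (hrate₁ y hy hd).1)

/-- Theorem 4.1 of the paper, exponential case. If `u₁, u₂` are
blow-up solutions of `Lu = e^u` both satisfying the two-sided bound
`N₁ d^{-2} ≤ e^{u_i} ≤ N₂ d^{-2}` in `Δ_ρ = {x ∈ Ω : d(x) < ρ}`, then `u₁ ≡ u₂`
in `Ω`. -/
theorem uniqueness_two_sided_rate_exponential {n : ℕ} (hn : 2 ≤ n)
    (Ω : Set (EuclideanSpace ℝ (Fin n)))
    (hΩo : IsOpen Ω) (hΩc : IsConnected Ω) (hΩb : IsBounded Ω)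
    (a : EuclideanSpace ℝ (Fin n) → Fin n → Fin n → ℝ)
    (b : EuclideanSpace ℝ (Fin n) → Fin n → ℝ)
    (c : EuclideanSpace ℝ (Fin n) → ℝ)
    (K lam Lam : ℝ) (hco : CoeffsOK a b c K lam Lam)
    (u₁ u₂ : EuclideanSpace ℝ (Fin n) → ℝ)
    (hu₁ : ContDiffOn ℝ 2 u₁ Ω) (hu₂ : ContDiffOn ℝ 2 u₂ Ω)
    (heq₁ : ∀ x ∈ Ω, Lop a b c u₁ x = Real.exp (u₁ x))
    (heq₂ : ∀ x ∈ Ω, Lop a b c u₂ x = Real.exp (u₂ x))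
    (hb₁ : BlowsUp Ω u₁) (hb₂ : BlowsUp Ω u₂)
    (N₁ N₂ ρ : ℝ) (hN₁ : 0 < N₁) (hN₂ : 0 < N₂) (hρ : 0 < ρ)
    (hrate₁ : ∀ x ∈ Ω, infDist x (frontier Ω) < ρ →
      N₁ / infDist x (frontier Ω) ^ 2 ≤ Real.exp (u₁ x) ∧
      Real.exp (u₁ x) ≤ N₂ / infDist x (frontier Ω) ^ 2)
    (hrate₂ : ∀ x ∈ Ω, infDist x (frontier Ω) < ρ →
      N₁ / infDist x (frontier Ω) ^ 2 ≤ Real.exp (u₂ x) ∧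
      Real.exp (u₂ x) ≤ N₂ / infDist x (frontier Ω) ^ 2) :
    EqOn u₁ u₂ Ω :=
  uniqueness_two_sided_rate_exponential_general Ω hΩo hΩb a b c K lam Lam hco u₁ u₂ hu₁ hu₂ heq₁
    heq₂ hb₁ hb₂ N₁ N₂ ρ hN₁ hN₂ hρ hrate₁ hrate₂
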